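/- Let 0 < ε < π and set δ = ε²/(6π²). If x = (x1,...,x6) ∈ ℝ⁶ satisfies x3, x5 ∈ [1, 2], x2, x4, x6 ∈ [1/2, 2] and 1 ≤ x1 ≤ 1 + δ, then φ(x) ≥ 1 − (2/π²)·ε² ≥ cos ε, where φ(x) = (x3·x4 + x2·x5 + x1·x2·x3 + x1·x4·x5 + x6 − x1²·x6) / (√(x1² + x3² + x5² + 2·x1·x3·x5 − 1) · √(x2² + x4² + 2·x1·x2·x4)). -/
import Mathlib


/-- The cosine of the dihedral angle at the hyper-ideal edge e23 of a decorated
3-1 type hyperbolic tetrahedron. -/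
noncomputable def phi (x1 x2 x3 x4 x5 x6 : ℝ) : ℝ :=
  (x3 * x4 + x2 * x5 + x1 * x2 * x3 + x1 * x4 * x5 + x6 - x1 ^ 2 * x6) /
    (Real.sqrt (x1 ^ 2 + x3 ^ 2 + x5 ^ 2 + 2 * x1 * x3 * x5 - 1) *
      Real.sqrt (x2 ^ 2 + x4 ^ 2 + 2 * x1 * x2 * x4))

lemma key_poly (t P : ℝ) (ht : 0 ≤ t) (hP : 2 ≤ P) :
    (1 - 12*t) * (P * ((1 + 61*t/48) * (1 + 4*t))) ≤ P - 13*t/3 := by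
  nlinarith [mul_nonneg ht ht, mul_nonneg (mul_nonneg ht ht) ht, sq_nonneg t,
    mul_nonneg ht (sub_nonneg.2 hP), mul_nonneg (mul_nonneg ht ht) (sub_nonneg.2 hP),
    mul_nonneg (mul_nonneg (mul_nonneg ht ht) ht) (sub_nonneg.2 hP)]

lemma sqA_bound (t x3 x5 : ℝ) (ht0 : 0 ≤ t) (ht6 : t ≤ 1/6)
    (h3a : 1 ≤ x3) (h3b : x3 ≤ 2) (h5a : 1 ≤ x5) (h5b : x5 ≤ 2) :
    (1+t) ^ 2 + x3 ^ 2 + x5 ^ 2 + 2 * (1+t) * x3 * x5 - 1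
      ≤ ((x3 + x5) * (1 + 61*t/48)) ^ 2 := by
  nlinarith [mul_nonneg ht0 (by nlinarith : (0:ℝ) ≤ (x3+x5)^2 - 4),
    mul_nonneg ht0 (by nlinarith : (0:ℝ) ≤ 4 - x3*x5),
    mul_nonneg ht0 (by linarith : (0:ℝ) ≤ 1/6 - t),
    mul_nonneg (mul_nonneg ht0 ht0) (sq_nonneg (x3+x5))]

lemma sqB_bound (t x2 x4 : ℝ) (ht0 : 0 ≤ t)
    (h2a : 1/2 ≤ x2) (h2b : x2 ≤ 2) (h4a : 1/2 ≤ x4) (h4b : x4 ≤ 2) :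
    x2 ^ 2 + x4 ^ 2 + 2 * (1+t) * x2 * x4 ≤ ((x2 + x4) * (1 + 4*t)) ^ 2 := by
  nlinarith [mul_nonneg ht0 (by nlinarith : (0:ℝ) ≤ (x2+x4)^2 - 1),
    mul_nonneg ht0 (by nlinarith : (0:ℝ) ≤ 4 - x2*x4),
    mul_nonneg (mul_nonneg ht0 ht0) (sq_nonneg (x2+x4))]

lemma num_bound (t x2 x3 x4 x5 x6 : ℝ) (ht0 : 0 ≤ t) (ht6 : t ≤ 1/6)
    (h3a : 1 ≤ x3) (h5a : 1 ≤ x5)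
    (h2a : 1/2 ≤ x2) (h4a : 1/2 ≤ x4) (h6a : 1/2 ≤ x6) (h6b : x6 ≤ 2) :
    (x3 + x5) * (x2 + x4) - 13*t/3 ≤
      x3 * x4 + x2 * x5 + (1+t) * x2 * x3 + (1+t) * x4 * x5 + x6 - (1+t) ^ 2 * x6 := by
  have h1 : 0 ≤ t * (x2 * x3 + x4 * x5) := by positivity
  have h2 : (2*t + t^2) * x6 ≤ t * (13/3) := by nlinarith
  nlinarith [h1, h2]

lemma aux_main (t δ x2 x3 x4 x5 x6 : ℝ) (ht0 : 0 ≤ t) (htδ : t ≤ δ) (hδ6 : δ ≤ 1/6)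
    (h3a : 1 ≤ x3) (h3b : x3 ≤ 2) (h5a : 1 ≤ x5) (h5b : x5 ≤ 2)
    (h2a : 1/2 ≤ x2) (h2b : x2 ≤ 2) (h4a : 1/2 ≤ x4) (h4b : x4 ≤ 2)
    (h6a : 1/2 ≤ x6) (h6b : x6 ≤ 2) :
    1 - 12 * δ ≤ phi (1+t) x2 x3 x4 x5 x6 := by
  have ht6 : t ≤ 1/6 := htδ.trans hδ6
  have hP2 : 2 ≤ (x3 + x5) * (x2 + x4) := by nlinarith
  have hNlb := num_bound t x2 x3 x4 x5 x6 ht0 ht6 h3a h5a h2a h4a h6a h6b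
  have hNpos : 0 < (x3 + x5) * (x2 + x4) - 13*t/3 := by linarith
  have hApos : 0 < (1+t) ^ 2 + x3 ^ 2 + x5 ^ 2 + 2 * (1+t) * x3 * x5 - 1 := by
    nlinarith [mul_nonneg (mul_nonneg (by linarith : (0:ℝ) ≤ 1+t) (by linarith : (0:ℝ) ≤ x3))
      (by linarith : (0:ℝ) ≤ x5), sq_nonneg t]
  have hBpos : 0 < x2 ^ 2 + x4 ^ 2 + 2 * (1+t) * x2 * x4 := by
    nlinarith [mul_pos (mul_pos (show (0:ℝ) < 1+t by linarith) (show (0:ℝ) < x2 by linarith))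
      (show (0:ℝ) < x4 by linarith)]
  have hKA : 0 ≤ (x3 + x5) * (1 + 61*t/48) := by positivity
  have hKB : 0 ≤ (x2 + x4) * (1 + 4*t) := by positivity
  have hsA : Real.sqrt ((1+t) ^ 2 + x3 ^ 2 + x5 ^ 2 + 2 * (1+t) * x3 * x5 - 1)
      ≤ (x3 + x5) * (1 + 61*t/48) := by
    rw [show (x3 + x5) * (1 + 61*t/48) = Real.sqrt (((x3 + x5) * (1 + 61*t/48))^2) from
      (Real.sqrt_sq hKA).symm]
    exact Real.sqrt_le_sqrt (sqA_bound t x3 x5 ht0 ht6 h3a h3b h5a h5b)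
  have hsB : Real.sqrt (x2 ^ 2 + x4 ^ 2 + 2 * (1+t) * x2 * x4)
      ≤ (x2 + x4) * (1 + 4*t) := by
    rw [show (x2 + x4) * (1 + 4*t) = Real.sqrt (((x2 + x4) * (1 + 4*t))^2) from
      (Real.sqrt_sq hKB).symm]
    exact Real.sqrt_le_sqrt (sqB_bound t x2 x4 ht0 h2a h2b h4a h4b)
  have hDpos : 0 < Real.sqrt ((1+t) ^ 2 + x3 ^ 2 + x5 ^ 2 + 2 * (1+t) * x3 * x5 - 1) *
      Real.sqrt (x2 ^ 2 + x4 ^ 2 + 2 * (1+t) * x2 * x4) :=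
    mul_pos (Real.sqrt_pos.2 hApos) (Real.sqrt_pos.2 hBpos)
  have hDle : Real.sqrt ((1+t) ^ 2 + x3 ^ 2 + x5 ^ 2 + 2 * (1+t) * x3 * x5 - 1) *
      Real.sqrt (x2 ^ 2 + x4 ^ 2 + 2 * (1+t) * x2 * x4)
      ≤ ((x3 + x5) * (x2 + x4)) * ((1 + 61*t/48) * (1 + 4*t)) := by
    calc _ ≤ ((x3 + x5) * (1 + 61*t/48)) * ((x2 + x4) * (1 + 4*t)) :=
          mul_le_mul hsA hsB (Real.sqrt_nonneg _) hKA
      _ = ((x3 + x5) * (x2 + x4)) * ((1 + 61*t/48) * (1 + 4*t)) := by ring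
  have hDmaxpos : 0 < ((x3 + x5) * (x2 + x4)) * ((1 + 61*t/48) * (1 + 4*t)) := by positivity
  rw [phi]
  calc 1 - 12 * δ
      ≤ ((x3 + x5) * (x2 + x4) - 13*t/3) /
          (((x3 + x5) * (x2 + x4)) * ((1 + 61*t/48) * (1 + 4*t))) := by
        rw [le_div_iff₀ hDmaxpos]
        calc (1 - 12*δ) * (((x3 + x5) * (x2 + x4)) * ((1 + 61*t/48) * (1 + 4*t)))
            ≤ (1 - 12*t) * (((x3 + x5) * (x2 + x4)) * ((1 + 61*t/48) * (1 + 4*t))) := by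
              apply mul_le_mul_of_nonneg_right (by linarith) hDmaxpos.le
          _ ≤ (x3 + x5) * (x2 + x4) - 13*t/3 := key_poly t _ ht0 hP2
    _ ≤ ((x3 + x5) * (x2 + x4) - 13*t/3) /
          (Real.sqrt ((1+t) ^ 2 + x3 ^ 2 + x5 ^ 2 + 2 * (1+t) * x3 * x5 - 1) *
            Real.sqrt (x2 ^ 2 + x4 ^ 2 + 2 * (1+t) * x2 * x4)) :=
        div_le_div_of_nonneg_left hNpos.le hDpos hDle
    _ ≤ _ := div_le_div_of_nonneg_right hNlb hDpos.le

/-- quantitative version for C = 2, with δ = ε²/(6π²). -/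
theorem stmt_17 (ε x1 x2 x3 x4 x5 x6 : ℝ) (hε : 0 < ε) (hεπ : ε < Real.pi)
    (h3 : 1 ≤ x3 ∧ x3 ≤ 2) (h5 : 1 ≤ x5 ∧ x5 ≤ 2)
    (h2 : 1/2 ≤ x2 ∧ x2 ≤ 2) (h4 : 1/2 ≤ x4 ∧ x4 ≤ 2) (h6 : 1/2 ≤ x6 ∧ x6 ≤ 2)
    (h1 : 1 ≤ x1 ∧ x1 ≤ 1 + ε ^ 2 / (6 * Real.pi ^ 2)) :
    1 - (2 / Real.pi ^ 2) * ε ^ 2 ≤ phi x1 x2 x3 x4 x5 x6 ∧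
    Real.cos ε ≤ 1 - (2 / Real.pi ^ 2) * ε ^ 2 := by
  have hπ : 0 < Real.pi := Real.pi_pos
  refine ⟨?_, Real.cos_le_one_sub_mul_cos_sq (by rw [abs_of_pos hε]; exact hεπ.le)⟩
  have hδ6 : ε ^ 2 / (6 * Real.pi ^ 2) ≤ 1/6 := by
    rw [div_le_iff₀ (by positivity)]
    nlinarith [sq_nonneg (ε - Real.pi)]
  have hgoal : 1 - (2 / Real.pi ^ 2) * ε ^ 2 = 1 - 12 * (ε ^ 2 / (6 * Real.pi ^ 2)) := by
    field_simp; ring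
  rw [hgoal, show x1 = 1 + (x1 - 1) from by ring]
  exact aux_main (x1 - 1) _ x2 x3 x4 x5 x6 (by linarith [h1.1]) (by linarith [h1.2]) hδ6
    h3.1 h3.2 h5.1 h5.2 h2.1 h2.2 h4.1 h4.2 h6.1 h6.2
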